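/- If there exists an (n,W)-universal graph with s vertices, then there exists an (n,W)-separating automaton of size s (i.e., with s states not counting the rejecting state ⊥). -/

import Mathlib

open Filter


/-- A finite path: a list of consecutive edges, all belonging to `E`,
starting at `u` (when nonempty). -/
def FinPath {V : Type} (E : Set (V × ℤ × V)) (u : V) (p : List (V × ℤ × V)) : Prop :=
  (∀ e ∈ p, e ∈ E) ∧ List.Chain' (fun e e' => e.2.2 = e'.1) p ∧
    ∀ h : p ≠ [], (p.head h).1 = u

/-- The last vertex of a finite path starting at `u` (which is `u` itself for the empty path). -/
def lastV {V : Type} (u : V) (p : List (V × ℤ × V)) : V :=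
  (p.getLastD (u, 0, u)).2.2

/-- An infinite path: a sequence of consecutive edges, all belonging to `E`. -/
def InfPath {V : Type} (E : Set (V × ℤ × V)) (π : ℕ → V × ℤ × V) : Prop :=
  (∀ i, π i ∈ E) ∧ ∀ i, (π i).2.2 = (π (i + 1)).1

/-- The total weight of a finite path. -/
def pathWeight {V : Type} (p : List (V × ℤ × V)) : ℤ :=
  (p.map fun e => e.2.1).sum

/-- A sequence of integer weights satisfies mean payoff if the liminf of the
averages of its prefixes is nonnegative. -/
def MeanPayoffSeq (w : ℕ → ℤ) : Prop :=
  0 ≤ Filter.atTop.liminf (fun ℓ : ℕ => (∑ i ∈ Finset.range ℓ, (w i : ℝ)) / (ℓ : ℝ))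

/-- A graph (given by its edge set) satisfies mean payoff if all its infinite paths do. -/
def SatMP {V : Type} (E : Set (V × ℤ × V)) : Prop :=
  ∀ π : ℕ → V × ℤ × V, InfPath E π → MeanPayoffSeq (fun i => (π i).2.1)

/-- A cycle: a nonempty finite path whose first and last vertices coincide. -/
def IsCycle {V : Type} (E : Set (V × ℤ × V)) (p : List (V × ℤ × V)) : Prop :=
  p ≠ [] ∧ ∃ v, FinPath E v p ∧ lastV v p = v

/-- A `W`-graph: a finite set of vertices, edges labelled by weights in `W`,
and an initial vertex from which every vertex is reachable. -/
structure WGraph (W : Finset ℤ) where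
  V : Type
  fin : Fintype V
  E : Set (V × ℤ × V)
  init : V
  wt : ∀ e ∈ E, e.2.1 ∈ W
  reach : ∀ v : V, ∃ p, FinPath E init p ∧ lastV init p = v

attribute [instance] WGraph.fin

/-- A deterministic safety automaton over the alphabet `W`. -/
structure SafetyAut (W : Finset ℤ) where
  Q : Type
  fin : Fintype Q
  bot : Q
  qinit : Q
  δ : Q → ℤ → Q
  bot_absorbing : ∀ w ∈ W, δ bot w = bot

attribute [instance] SafetyAut.fin

/-- The run of the automaton over an infinite word. -/
def SafetyAut.run {W : Finset ℤ} (A : SafetyAut W) (w : ℕ → ℤ) : ℕ → A.Q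
  | 0 => A.qinit
  | i + 1 => A.δ (A.run w i) (w i)

/-- The language of the automaton: words over `W` whose run never visits `⊥`. -/
def SafetyAut.Lang {W : Finset ℤ} (A : SafetyAut W) : Set (ℕ → ℤ) :=
  {w | (∀ i, w i ∈ W) ∧ ∀ i, A.run w i ≠ A.bot}

/-- `MP(W)`: the set of infinite words over `W` satisfying mean payoff. -/
def MPlang (W : Finset ℤ) : Set (ℕ → ℤ) :=
  {w | (∀ i, w i ∈ W) ∧ MeanPayoffSeq w}

/-- `MP_n(W)`: the set of weight sequences of infinite paths of `(n,W)`-graphs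
satisfying mean payoff. -/
def MPn (n : ℕ) (W : Finset ℤ) : Set (ℕ → ℤ) :=
  {w | ∃ G : WGraph W, Fintype.card G.V ≤ n ∧ SatMP G.E ∧
    ∃ π, InfPath G.E π ∧ ∀ i, (π i).2.1 = w i}

/-- An `(n,W)`-separating automaton: its language `L` satisfies `MP_n(W) ⊆ L ⊆ MP(W)`. -/
def Separating {W : Finset ℤ} (n : ℕ) (A : SafetyAut W) : Prop :=
  MPn n W ⊆ A.Lang ∧ A.Lang ⊆ MPlang W

/-- The `W`-linear graph on a set `A ⊆ ℤ`: vertices are the elements of `A`, and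
for `v, v' ∈ A` and `w ∈ W` there is an edge `(v, w, v')` whenever `v' - v ≤ w`. -/
def LinE (W : Finset ℤ) (A : Set ℤ) : Set (ℤ × ℤ × ℤ) :=
  {e | e.1 ∈ A ∧ e.2.2 ∈ A ∧ e.2.1 ∈ W ∧ e.2.2 - e.1 ≤ e.2.1}

/-- A homomorphism of labelled graphs (no requirement on initial vertices). -/
def IsHom {V U : Type} (E : Set (V × ℤ × V)) (E' : Set (U × ℤ × U)) (φ : V → U) : Prop :=
  ∀ e ∈ E, (φ e.1, e.2.1, φ e.2.2) ∈ E'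

/-- A graph (given by its edge set) is `(n,W)`-universal if it satisfies mean payoff and
every `(n,W)`-graph satisfying mean payoff admits a homomorphism into it. -/
def Universal (n : ℕ) (W : Finset ℤ) {U : Type} (EU : Set (U × ℤ × U)) : Prop :=
  SatMP EU ∧
    ∀ G : WGraph W, Fintype.card G.V ≤ n → SatMP G.E → ∃ φ : G.V → U, IsHom G.E EU φ

/-- The set of weights `(-N, N)`: integers `w` with `-N < w < N`. -/
noncomputable def Wball (N : ℕ) : Finset ℤ := Finset.Ioo (-(N : ℤ)) (N : ℤ)

/-- `φ` is the distance function from the initial vertex: `φ v` is the minimum total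
weight of a finite path from the initial vertex to `v`. -/
def IsDistFrom {W : Finset ℤ} (G : WGraph W) (φ : G.V → ℤ) : Prop :=
  ∀ v : G.V,
    (∃ p, FinPath G.E G.init p ∧ lastV G.init p = v ∧ pathWeight p = φ v) ∧
    ∀ p, FinPath G.E G.init p → lastV G.init p = v → φ v ≤ pathWeight p

/-! A universal graph satisfying mean payoff has no negative cycle, so (Bellman–Ford) its vertices
carry a potential `ψ` with `ψ u' ≤ ψ u + w` along every edge `(u, w, u')`: the least weight of a
walk ending at `u`. Pushing a path of an `(n,W)`-graph into the universal graph, the potentials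
along it form a sequence in the finite set `T ⊇ ψ(U)` that starts at most `0` (the empty walk) and
rises by at most the weight read at each step. The automaton with states `T ∪ {⊥}` that starts at
the largest `t ∈ T` with `t ≤ 0` and always moves to the largest `t' ∈ T` with `t' ≤ t + w`
therefore stays above that sequence and never rejects. Conversely an accepted word has
partial sums bounded below by `min T - max T`, hence satisfies mean payoff. -/

open Finset Filter Function

noncomputable def prefixAvg (w : ℕ → ℤ) (ℓ : ℕ) : ℝ :=
  (∑ i ∈ range ℓ, (w i : ℝ)) / ℓ

lemma abs_prefixAvg_le {w : ℕ → ℤ} {M : ℝ} (hM : ∀ i, |(w i : ℝ)| ≤ M) (ℓ : ℕ) :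
    |prefixAvg w ℓ| ≤ M := by
  rcases ℓ.eq_zero_or_pos with rfl | hℓ
  · simpa [prefixAvg] using (abs_nonneg _).trans (hM 0)
  · rw [prefixAvg, abs_div, Nat.abs_cast, div_le_iff₀ (by exact_mod_cast hℓ)]
    calc |∑ i ∈ range ℓ, (w i : ℝ)| ≤ ∑ i ∈ range ℓ, |(w i : ℝ)| := abs_sum_le_sum_abs _ _
      _ ≤ #(range ℓ) • M := sum_le_card_nsmul _ _ _ fun i _ => hM i
      _ = M * ℓ := by rw [card_range, nsmul_eq_mul, mul_comm]

lemma isBoundedUnder_prefixAvg {w : ℕ → ℤ} (hw : (Set.range w).Finite) :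
    IsBoundedUnder (· ≤ ·) atTop (prefixAvg w) ∧ IsBoundedUnder (· ≥ ·) atTop (prefixAvg w) := by
  obtain ⟨M, hM⟩ := (hw.image fun z : ℤ => |(z : ℝ)|).bddAbove
  have h := abs_prefixAvg_le (M := M) fun i => hM ⟨w i, ⟨i, rfl⟩, rfl⟩
  exact ⟨isBoundedUnder_of ⟨M, fun ℓ => (abs_le.mp (h ℓ)).2⟩,
    isBoundedUnder_of ⟨-M, fun ℓ => (abs_le.mp (h ℓ)).1⟩⟩

lemma Function.Periodic.sum_range_mul {β : Type*} [AddCommMonoid β] {c : ℕ → β} {L : ℕ}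
    (hc : Periodic c L) (k : ℕ) : ∑ i ∈ range (k * L), c i = k • ∑ i ∈ range L, c i := by
  induction k with
  | zero => simp
  | succ k ih =>
    rw [Nat.succ_mul, sum_range_add, ih, succ_nsmul]
    congr 1
    exact sum_congr rfl fun i _ => by rw [add_comm]; simpa using hc.nat_mul k i

lemma Function.Periodic.prefixAvg_mul {c : ℕ → ℤ} {L : ℕ} (hc : Periodic c L) {k : ℕ}
    (hk : 0 < k) : prefixAvg c (k * L) = prefixAvg c L := by
  have hc' : Periodic (fun i => (c i : ℝ)) L := fun i => congrArg _ (hc i)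
  rw [prefixAvg, prefixAvg, hc'.sum_range_mul, nsmul_eq_mul, Nat.cast_mul,
    mul_div_mul_left _ _ (by positivity)]

lemma not_meanPayoffSeq_of_periodic {c : ℕ → ℤ} {L : ℕ} (hc : Periodic c L) (hL : 0 < L)
    (hneg : ∑ i ∈ range L, c i < 0) : ¬ MeanPayoffSeq c := by
  have hfin : (Set.range c).Finite :=
    ((Set.finite_Iio L).image c).subset fun _ ⟨i, hi⟩ =>
      ⟨i % L, Nat.mod_lt i hL, (hc.map_mod_nat i).trans hi⟩
  have hfreq : ∃ᶠ ℓ in atTop, prefixAvg c ℓ ≤ prefixAvg c L :=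
    frequently_atTop.mpr fun a =>
      ⟨(a + 1) * L, (a.le_succ).trans (Nat.le_mul_of_pos_right _ hL),
        (hc.prefixAvg_mul a.succ_pos).le⟩
  have hL_neg : prefixAvg c L < 0 :=
    div_neg_of_neg_of_pos (by exact_mod_cast hneg) (by exact_mod_cast hL)
  exact fun hmp => (hmp.trans (liminf_le_of_frequently_le hfreq
    (isBoundedUnder_prefixAvg hfin).2)).not_gt hL_neg

lemma meanPayoffSeq_of_le_sum {w : ℕ → ℤ} {B : ℤ} (hw : (Set.range w).Finite)
    (hB : ∀ ℓ, B ≤ ∑ i ∈ range ℓ, w i) : MeanPayoffSeq w := by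
  have hlim := tendsto_const_div_atTop_nhds_zero_nat (B : ℝ)
  calc (0 : ℝ) = atTop.liminf fun ℓ : ℕ => (B : ℝ) / ℓ := hlim.liminf_eq.symm
    _ ≤ atTop.liminf (prefixAvg w) :=
      liminf_le_liminf (Eventually.of_forall fun ℓ =>
          div_le_div_of_nonneg_right (by exact_mod_cast hB ℓ) ℓ.cast_nonneg)
        hlim.isBoundedUnder_ge (isBoundedUnder_prefixAvg hw).1.isCoboundedUnder_ge

section Walks

variable {U : Type} {E : Set (U × ℤ × U)}

def IsWalk (E : Set (U × ℤ × U)) (m : ℕ) (x : ℕ → U) (c : ℕ → ℤ) : Prop :=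
  ∀ i < m, (x i, c i, x (i + 1)) ∈ E

lemma IsWalk.snoc {m : ℕ} {x : ℕ → U} {c : ℕ → ℤ} {w : ℤ} {u : U} (hx : IsWalk E m x c)
    (he : (x m, w, u) ∈ E) : IsWalk E (m + 1) (update x (m + 1) u) (update c m w) := by
  intro i hi
  rcases (Nat.lt_succ_iff.mp hi).lt_or_eq with hi | rfl
  · simpa [update_of_ne (by omega : i ≠ m + 1), update_of_ne (by omega : i + 1 ≠ m + 1),
      update_of_ne hi.ne] using hx i hi
  · simpa using he

lemma SatMP.mono {E' : Set (U × ℤ × U)} (hE' : SatMP E') (h : E ⊆ E') : SatMP E :=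
  fun π hπ => hE' π ⟨fun i => h (hπ.1 i), hπ.2⟩

lemma SatMP.sum_nonneg_of_isWalk_of_cycle (hE : SatMP E) {L : ℕ} {x : ℕ → U} {c : ℕ → ℤ}
    (hx : IsWalk E L x c) (hcyc : x L = x 0) : 0 ≤ ∑ i ∈ range L, c i := by
  rcases L.eq_zero_or_pos with rfl | hL
  · simp
  by_contra! hneg
  have hper : Periodic (fun i => c (i % L)) L := fun i => by simp only [Nat.add_mod_right]
  have hsum : ∑ i ∈ range L, c (i % L) = ∑ i ∈ range L, c i :=
    sum_congr rfl fun i hi => by rw [Nat.mod_eq_of_lt (mem_range.mp hi)]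
  -- the cycle, repeated forever, is an infinite path of negative mean payoff
  have hpath : InfPath E fun i => (x (i % L), c (i % L), x (i % L + 1)) := by
    refine ⟨fun i => hx _ (Nat.mod_lt i hL), fun i => ?_⟩
    show x (i % L + 1) = x ((i + 1) % L)
    rw [← Nat.mod_add_mod i L 1]
    rcases Nat.lt_or_ge (i % L + 1) L with h | h
    · rw [Nat.mod_eq_of_lt h]
    · rw [le_antisymm (Nat.mod_lt i hL) h, Nat.mod_self, hcyc]
  exact not_meanPayoffSeq_of_periodic hper hL (hsum.trans_lt hneg) (hE _ hpath :)

/-- Cutting the walk at the last return to its start leaves a cycle, one edge, and a walk that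
avoids the start vertex. -/
lemma SatMP.mul_card_le_sum_of_isWalk [DecidableEq U] (hE : SatMP E) {B : ℤ} (hB0 : B ≤ 0)
    (hB : ∀ e ∈ E, B ≤ e.2.1) (m : ℕ) (x : ℕ → U) (c : ℕ → ℤ) (hx : IsWalk E m x c) :
    B * #((range m).image x) ≤ ∑ i ∈ range m, c i := by
  induction m using Nat.strong_induction_on generalizing x c with
  | _ m ih =>
  rcases m with _ | n
  · simp
  set j := Nat.findGreatest (fun j => x j = x 0) n
  have hjn : j ≤ n := Nat.findGreatest_le n
  set visited := (range (n + 1)).image x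
  set visitedAfter := (range (n - j)).image fun k => x (j + 1 + k)
  have hcycle : 0 ≤ ∑ i ∈ range j, c i :=
    hE.sum_nonneg_of_isWalk_of_cycle (fun i hi => hx i (by omega))
      (Nat.findGreatest_spec (P := fun j => x j = x 0) (Nat.zero_le n) rfl)
  have hedge : B ≤ c j := hB _ (hx j (by omega))
  have hafter : B * #visitedAfter ≤ ∑ k ∈ range (n - j), c (j + 1 + k) :=
    ih (n - j) (by omega) _ _ fun i hi => by simpa only [add_assoc] using hx (j + 1 + i) (by omega)
  have hsub : visitedAfter ⊆ visited.erase (x 0) := by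
    simp only [visitedAfter, visited, subset_iff, mem_image, mem_range, mem_erase]
    rintro _ ⟨k, hk, rfl⟩
    exact ⟨Nat.findGreatest_is_greatest (P := fun j => x j = x 0) (n := n) (by omega) (by omega),
      j + 1 + k, by omega, rfl⟩
  have hcard : #visitedAfter + 1 ≤ #visited :=
    card_erase_add_one (mem_image_of_mem x (mem_range.mpr n.succ_pos)) ▸
      Nat.add_le_add_right (card_le_card hsub) 1
  have hsum : ∑ i ∈ range (n + 1), c i =
      ∑ i ∈ range j, c i + c j + ∑ k ∈ range (n - j), c (j + 1 + k) := by
    rw [show n + 1 = j + 1 + (n - j) by omega, sum_range_add, sum_range_succ]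
  calc B * #visited ≤ B * (#visitedAfter + 1 : ℕ) :=
        mul_le_mul_of_nonpos_left (by exact_mod_cast hcard) hB0
    _ ≤ _ := by push_cast; linarith

def walkWeightsTo (E : Set (U × ℤ × U)) (u : U) : Set ℤ :=
  {z | ∃ m x c, IsWalk E m x c ∧ x m = u ∧ ∑ i ∈ range m, c i = z}

lemma zero_mem_walkWeightsTo (u : U) : 0 ∈ walkWeightsTo E u :=
  ⟨0, fun _ => u, fun _ => 0, fun _ hi => absurd hi (Nat.not_lt_zero _), rfl, sum_range_zero _⟩

lemma add_mem_walkWeightsTo {u u' : U} {z w : ℤ} (hz : z ∈ walkWeightsTo E u)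
    (he : (u, w, u') ∈ E) : z + w ∈ walkWeightsTo E u' := by
  obtain ⟨m, x, c, hx, rfl, rfl⟩ := hz
  refine ⟨m + 1, _, _, hx.snoc he, by simp, ?_⟩
  rw [sum_range_succ, update_self]
  congr 1
  exact sum_congr rfl fun i hi => update_of_ne (mem_range.mp hi).ne _ _

lemma SatMP.bddBelow_walkWeightsTo [Fintype U] (hE : SatMP E) {B : ℤ} (hB0 : B ≤ 0)
    (hB : ∀ e ∈ E, B ≤ e.2.1) (u : U) : BddBelow (walkWeightsTo E u) := by
  classical
  refine ⟨B * Fintype.card U, ?_⟩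
  rintro _ ⟨m, x, c, hx, -, rfl⟩
  calc B * Fintype.card U ≤ B * #((range m).image x) :=
        mul_le_mul_of_nonpos_left (by exact_mod_cast card_le_univ _) hB0
    _ ≤ _ := hE.mul_card_le_sum_of_isWalk hB0 hB m x c hx

def IsPotential (E : Set (U × ℤ × U)) (ψ : U → ℤ) : Prop :=
  ∀ e ∈ E, ψ e.2.2 ≤ ψ e.1 + e.2.1

lemma IsPotential.comp {V : Type} {G : Set (V × ℤ × V)} {ψ : U → ℤ} {φ : V → U}
    (hψ : IsPotential E ψ) (hφ : IsHom G E φ) : IsPotential G (ψ ∘ φ) :=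
  fun e he => hψ _ (hφ e he)

lemma IsPotential.le_of_infPath {ψ : U → ℤ} {π : ℕ → U × ℤ × U} (hψ : IsPotential E ψ)
    (hπ : InfPath E π) (i : ℕ) : ψ (π (i + 1)).1 ≤ ψ (π i).1 + (π i).2.1 :=
  hπ.2 i ▸ hψ _ (hπ.1 i)

lemma SatMP.exists_isPotential [Fintype U] (hE : SatMP E) {B : ℤ} (hB : ∀ e ∈ E, B ≤ e.2.1) :
    ∃ ψ : U → ℤ, IsPotential E ψ ∧ ∀ u, ψ u ≤ 0 := by
  have hbdd := hE.bddBelow_walkWeightsTo (min_le_right B 0) fun e he =>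
    (min_le_left B 0).trans (hB e he)
  refine ⟨fun u => sInf (walkWeightsTo E u), fun ⟨u, w, u'⟩ he => ?_,
    fun u => csInf_le (hbdd u) (zero_mem_walkWeightsTo u)⟩
  have : sInf (walkWeightsTo E u') - w ≤ sInf (walkWeightsTo E u) :=
    le_csInf ⟨0, zero_mem_walkWeightsTo u⟩ fun z hz =>
      sub_le_iff_le_add.mpr (csInf_le (hbdd u') (add_mem_walkWeightsTo hz he))
  exact sub_le_iff_le_add.mp this

end Walks

section LinearAutomaton

variable {W T : Finset ℤ}

noncomputable def greatestBelow (T : Finset ℤ) (z : ℤ) : Option T :=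
  if h : (T.filter (· ≤ z)).Nonempty then some ⟨_, mem_of_mem_filter _ (max'_mem _ h)⟩ else none

lemma exists_greatestBelow_eq_some {t z : ℤ} (ht : t ∈ T) (htz : t ≤ z) :
    ∃ t' : T, greatestBelow T z = some t' ∧ t ≤ t' := by
  have hmem : t ∈ T.filter (· ≤ z) := mem_filter.mpr ⟨ht, htz⟩
  exact ⟨_, dif_pos ⟨t, hmem⟩, le_max' _ _ hmem⟩

lemma le_of_greatestBelow_eq_some {z : ℤ} {t : T} (h : greatestBelow T z = some t) :
    (t : ℤ) ≤ z := by
  unfold greatestBelow at h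
  split_ifs at h with hne
  cases h
  exact (mem_filter.mp (max'_mem _ hne)).2

/-- The safety automaton of the `W`-linear graph on `T` (see `LinE`), `none` playing `⊥`. -/
noncomputable def linAut (W T : Finset ℤ) : SafetyAut W where
  Q := Option T
  fin := inferInstance
  bot := none
  qinit := greatestBelow T 0
  δ q w := q.bind fun t => greatestBelow T (t + w)
  bot_absorbing _ _ := rfl

lemma linAut_run_succ (w : ℕ → ℤ) (i : ℕ) :
    (linAut W T).run w (i + 1) = ((linAut W T).run w i).bind fun t => greatestBelow T (t + w i) :=
  rfl

lemma card_linAut_Q : Fintype.card (linAut W T).Q = #T + 1 := by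
  simp [linAut]

lemma mem_lang_linAut_of_le {w x : ℕ → ℤ} (hw : ∀ i, w i ∈ W) (hxT : ∀ i, x i ∈ T)
    (hx0 : x 0 ≤ 0) (hx : ∀ i, x (i + 1) ≤ x i + w i) : w ∈ (linAut W T).Lang := by
  have hrun : ∀ i, ∃ t : T, (linAut W T).run w i = some t ∧ x i ≤ t := by
    intro i
    induction i with
    | zero => exact exists_greatestBelow_eq_some (hxT 0) hx0
    | succ i ih =>
      obtain ⟨t, ht, hxt⟩ := ih
      rw [linAut_run_succ, ht, Option.bind_some]
      exact exists_greatestBelow_eq_some (hxT _) ((hx i).trans (by linarith))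
  refine ⟨hw, fun i => ?_⟩
  obtain ⟨t, ht, -⟩ := hrun i
  rw [ht]
  exact Option.some_ne_none t

lemma lang_linAut_subset_MPlang : (linAut W T).Lang ⊆ MPlang W := by
  rintro w ⟨hw, hrun⟩
  set t : ℕ → T := fun i => ((linAut W T).run w i).get (Option.isSome_iff_ne_none.mpr (hrun i))
  have hts : ∀ i, (linAut W T).run w i = some (t i) := fun i => (Option.some_get _).symm
  have hstep : ∀ i, (t (i + 1) : ℤ) ≤ t i + w i := fun i =>
    le_of_greatestBelow_eq_some (by rw [← hts, linAut_run_succ, hts, Option.bind_some])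
  have hT : T.Nonempty := ⟨t 0, (t 0).2⟩
  refine ⟨hw, meanPayoffSeq_of_le_sum (B := T.min' hT - t 0)
    ((W.finite_toSet).subset (Set.range_subset_iff.mpr hw)) fun ℓ => ?_⟩
  calc T.min' hT - t 0 ≤ t ℓ - t 0 := sub_le_sub_right (min'_le _ _ (t ℓ).2) _
    _ = ∑ i ∈ range ℓ, ((t (i + 1) : ℤ) - t i) := (sum_range_sub (fun i => (t i : ℤ)) ℓ).symm
    _ ≤ ∑ i ∈ range ℓ, w i := sum_le_sum fun i _ => sub_le_iff_le_add'.mpr (hstep i)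

end LinearAutomaton

/-- an `(n,W)`-universal graph with `s` vertices induces an
`(n,W)`-separating automaton of size `s` (i.e. with `s` states not counting the
rejecting state `⊥`). -/
theorem universal_to_separating {W : Finset ℤ} (n s : ℕ) (U : Type) [Fintype U]
    (EU : Set (U × ℤ × U)) (hU : Universal n W EU) (hs : Fintype.card U = s) :
    ∃ A : SafetyAut W, Separating n A ∧ Fintype.card A.Q = s + 1 := by
  obtain ⟨hMP, hhom⟩ := hU
  -- `EU` may carry weights outside `W`, unbounded below; only the edges weighted in `W` matter
  obtain ⟨B, hB⟩ := W.bddBelow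
  set E : Set (U × ℤ × U) := {e | e ∈ EU ∧ e.2.1 ∈ W}
  obtain ⟨ψ, hψ, hψ0⟩ := (hMP.mono fun e he => he.1 : SatMP E).exists_isPotential
    fun e he => hB he.2
  obtain ⟨T, hψT, hT⟩ := Infinite.exists_superset_card_eq (univ.image ψ) s
    (card_image_le.trans hs.le)
  refine ⟨linAut W T, ⟨?_, lang_linAut_subset_MPlang⟩, by rw [card_linAut_Q, hT]⟩
  rintro w ⟨G, hG, hGMP, π, hπ, hπw⟩
  obtain ⟨φ, hφ⟩ := hhom G hG hGMP
  have hψG : IsPotential G.E (ψ ∘ φ) := hψ.comp fun e he => ⟨hφ e he, G.wt e he⟩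
  refine mem_lang_linAut_of_le (x := fun i => ψ (φ (π i).1)) (fun i => hπw i ▸ G.wt _ (hπ.1 i))
    (fun i => hψT (mem_image_of_mem ψ (mem_univ _))) (hψ0 _) fun i => ?_
  simpa only [comp_apply, hπw] using hψG.le_of_infPath hπ i
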